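/- Modus ponens holds for SIBV: if A⊸B is provable in SIBV and A is provable in SIBV, then B is provable in SIBV. -/

import Mathlib

/-- IBV formulas: A ::= a | 1 | A⊗A | A⊸A | A◁A. -/
inductive IBVF : Type
  | atom : ℕ → IBVF
  | one : IBVF
  | tens : IBVF → IBVF → IBVF
  | limp : IBVF → IBVF → IBVF
  | seq : IBVF → IBVF → IBVF

open IBVF

/-- The inference rules of the deep inference system IBV, rewriting the premise
    to the conclusion.  The Boolean index is the polarity of the context where
    the rule may be applied: `true` = positive (∘-rules), `false` = negative
    (•-rules); rules with a universally quantified polarity apply in both. -/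
inductive IBVRule : Bool → IBVF → IBVF → Prop
  | ai_down (a : ℕ) : IBVRule true one (limp (atom a) (atom a))
  | u_down_seqL (A : IBVF) : IBVRule true A (seq one A)
  | u_down_seqR (A : IBVF) : IBVRule true A (seq A one)
  | ref_pos (A B : IBVF) : IBVRule true (tens A B) (seq A B)
  | ref_neg (A B : IBVF) : IBVRule false (seq A B) (tens A B)
  | sL_pos (A B C : IBVF) : IBVRule true (tens A (limp B C)) (limp (limp A B) C)
  | sR_pos (A B C : IBVF) : IBVRule true (tens (limp A B) C) (limp A (tens B C))
  | sL_neg (A B C : IBVF) : IBVRule false (limp (limp A B) C) (tens A (limp B C))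
  | sR_neg (A B C : IBVF) : IBVRule false (limp A (tens B C)) (tens (limp A B) C)
  | sqL_pos (A B C : IBVF) : IBVRule true (seq (limp A B) C) (limp A (seq B C))
  | sqR_pos (A B C : IBVF) : IBVRule true (seq B (limp A C)) (limp A (seq B C))
  | sqL_neg (A B C : IBVF) : IBVRule false (seq (tens A B) C) (tens A (seq B C))
  | sqR_neg (A B C : IBVF) : IBVRule false (seq B (tens A C)) (tens A (seq B C))
  | q_down_pos (A B C D : IBVF) :
      IBVRule true (seq (limp A B) (limp C D)) (limp (seq A C) (seq B D))
  | q_down_neg (A B C D : IBVF) :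
      IBVRule false (seq (tens A B) (tens C D)) (tens (seq A C) (seq B D))
  | com_tens (p : Bool) (A B : IBVF) : IBVRule p (tens A B) (tens B A)
  | asso_tens (p : Bool) (A B C : IBVF) :
      IBVRule p (tens (tens A B) C) (tens A (tens B C))
  | assoL_seq (p : Bool) (A B C : IBVF) :
      IBVRule p (seq (seq A B) C) (seq A (seq B C))
  | assoR_seq (p : Bool) (A B C : IBVF) :
      IBVRule p (seq A (seq B C)) (seq (seq A B) C)
  | u_down_tens (p : Bool) (A : IBVF) : IBVRule p A (tens one A)
  | u_down_limp (p : Bool) (A : IBVF) : IBVRule p A (limp one A)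
  | cur (p : Bool) (A B C : IBVF) :
      IBVRule p (limp (tens A B) C) (limp A (limp B C))
  | ruc (p : Bool) (A B C : IBVF) :
      IBVRule p (limp A (limp B C)) (limp (tens A B) C)

/-- The up-rules added to IBV to form the symmetric system SIBV. -/
inductive UpRule : Bool → IBVF → IBVF → Prop
  | ai_up (a : ℕ) : UpRule false (limp (atom a) (atom a)) one
  | u_up_seqL (A : IBVF) : UpRule false (seq one A) A
  | u_up_seqR (A : IBVF) : UpRule false (seq A one) A
  | u_up_tens (p : Bool) (A : IBVF) : UpRule p (tens one A) A
  | u_up_limp (p : Bool) (A : IBVF) : UpRule p (limp one A) A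
  | q_up_pos (A B C D : IBVF) :
      UpRule true (tens (seq A C) (seq B D)) (seq (tens A B) (tens C D))
  | q_up_neg (A B C D : IBVF) :
      UpRule false (limp (seq A C) (seq B D)) (seq (limp A B) (limp C D))

/-- The rules of the symmetric system SIBV: the IBV rules plus the up-rules. -/
def SIBVRule (p : Bool) (A B : IBVF) : Prop := IBVRule p A B ∨ UpRule p A B

/-- One deep rewrite step, for a given rule system `R`.  `Step R p X Y` means
    that `X` rewrites to `Y` by applying a rule of `R` at some position whose
    polarity (relative to the ambient polarity `p`) matches the rule's polarity
    annotation; polarity flips when descending into the left of a ⊸. -/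
inductive Step (R : Bool → IBVF → IBVF → Prop) : Bool → IBVF → IBVF → Prop
  | rule {p : Bool} {A B : IBVF} : R p A B → Step R p A B
  | tensL {p : Bool} {A A' B : IBVF} :
      Step R p A A' → Step R p (tens A B) (tens A' B)
  | tensR {p : Bool} {A B B' : IBVF} :
      Step R p B B' → Step R p (tens A B) (tens A B')
  | seqL {p : Bool} {A A' B : IBVF} :
      Step R p A A' → Step R p (seq A B) (seq A' B)
  | seqR {p : Bool} {A B B' : IBVF} :
      Step R p B B' → Step R p (seq A B) (seq A B')
  | limpL {p : Bool} {A A' B : IBVF} :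
      Step R (!p) A A' → Step R p (limp A B) (limp A' B)
  | limpR {p : Bool} {A B B' : IBVF} :
      Step R p B B' → Step R p (limp A B) (limp A B')

/-- A derivation of polarity `p` (`true` = positive, `false` = negative) in the
    system `R` from premise `X` to conclusion `Y`: a finite sequence of deep
    rewrite steps. -/
def Deriv (R : Bool → IBVF → IBVF → Prop) (p : Bool) : IBVF → IBVF → Prop :=
  Relation.ReflTransGen (Step R p)

/-- A formula is provable in IBV if there is a positive derivation from 1. -/
def IBVProvable (A : IBVF) : Prop := Deriv IBVRule true one A

/-- A formula is provable in SIBV if there is a positive derivation from 1. -/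
def SIBVProvable (A : IBVF) : Prop := Deriv SIBVRule true one A

/-!
SIBV is closed under reversal: every rule read backwards at the opposite polarity is
derivable, the down-rules being undone by the matching up-rules (or by their own duals) and
the seq-switches by `q↑` with a unit inserted. Hence a proof `1 ⟶ A` reverses to a negative
derivation `A ⟶ 1`, which, applied in the antecedent of `A ⊸ B`, continues the proof of
`A ⊸ B` to `1 ⊸ B` and then, by the co-unit, to `B`.
-/

open Relation

namespace Deriv

variable {R : Bool → IBVF → IBVF → Prop} {p : Bool}

theorem trans {X Y Z : IBVF} (h₁ : Deriv R p X Y) (h₂ : Deriv R p Y Z) : Deriv R p X Z :=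
  ReflTransGen.trans h₁ h₂

theorem tens_left {A A' : IBVF} (B : IBVF) (h : Deriv R p A A') :
    Deriv R p (tens A B) (tens A' B) :=
  ReflTransGen.lift (tens · B) (fun _ _ => Step.tensL) _ _ h

theorem tens_right (A : IBVF) {B B' : IBVF} (h : Deriv R p B B') :
    Deriv R p (tens A B) (tens A B') :=
  ReflTransGen.lift (tens A) (fun _ _ => Step.tensR) _ _ h

theorem seq_left {A A' : IBVF} (B : IBVF) (h : Deriv R p A A') :
    Deriv R p (seq A B) (seq A' B) :=
  ReflTransGen.lift (seq · B) (fun _ _ => Step.seqL) _ _ h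

theorem seq_right (A : IBVF) {B B' : IBVF} (h : Deriv R p B B') :
    Deriv R p (seq A B) (seq A B') :=
  ReflTransGen.lift (seq A) (fun _ _ => Step.seqR) _ _ h

theorem limp_left {A A' : IBVF} (B : IBVF) (h : Deriv R (!p) A A') :
    Deriv R p (limp A B) (limp A' B) :=
  ReflTransGen.lift (limp · B) (fun _ _ => Step.limpL) _ _ h

theorem limp_right (A : IBVF) {B B' : IBVF} (h : Deriv R p B B') :
    Deriv R p (limp A B) (limp A B') :=
  ReflTransGen.lift (limp A) (fun _ _ => Step.limpR) _ _ h

end Deriv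

theorem IBVRule.deriv {p : Bool} {A B : IBVF} (h : IBVRule p A B) : Deriv SIBVRule p A B :=
  ReflTransGen.single (Step.rule (Or.inl h))

theorem UpRule.deriv {p : Bool} {A B : IBVF} (h : UpRule p A B) : Deriv SIBVRule p A B :=
  ReflTransGen.single (Step.rule (Or.inr h))

theorem Deriv.tens_assoc_symm (p : Bool) (A B C : IBVF) :
    Deriv SIBVRule p (tens A (tens B C)) (tens (tens A B) C) :=
  (IBVRule.com_tens p _ _).deriv.trans <| (IBVRule.asso_tens p _ _ _).deriv.trans <|
    (IBVRule.com_tens p _ _).deriv.trans <| (IBVRule.asso_tens p _ _ _).deriv.trans <|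
      (IBVRule.com_tens p _ _).deriv

theorem UpRule.deriv_reverse {p : Bool} {A B : IBVF} (h : UpRule p A B) :
    Deriv SIBVRule (!p) B A := by
  cases h with
  | ai_up a => exact (IBVRule.ai_down a).deriv
  | u_up_seqL _ => exact (IBVRule.u_down_seqL _).deriv
  | u_up_seqR _ => exact (IBVRule.u_down_seqR _).deriv
  | u_up_tens p _ => exact (IBVRule.u_down_tens (!p) _).deriv
  | u_up_limp p _ => exact (IBVRule.u_down_limp (!p) _).deriv
  | q_up_pos A B C D => exact (IBVRule.q_down_neg A B C D).deriv
  | q_up_neg A B C D => exact (IBVRule.q_down_pos A B C D).deriv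

theorem IBVRule.deriv_reverse {p : Bool} {A B : IBVF} (h : IBVRule p A B) :
    Deriv SIBVRule (!p) B A := by
  cases h with
  | ai_down a => exact (UpRule.ai_up a).deriv
  | u_down_seqL A => exact (UpRule.u_up_seqL A).deriv
  | u_down_seqR A => exact (UpRule.u_up_seqR A).deriv
  | ref_pos A B => exact (IBVRule.ref_neg A B).deriv
  | ref_neg A B => exact (IBVRule.ref_pos A B).deriv
  | sL_pos A B C => exact (IBVRule.sL_neg A B C).deriv
  | sR_pos A B C => exact (IBVRule.sR_neg A B C).deriv
  | sL_neg A B C => exact (IBVRule.sL_pos A B C).deriv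
  | sR_neg A B C => exact (IBVRule.sR_pos A B C).deriv
  -- A seq-switch is undone by `q↑` after padding the moved formula with a unit, e.g.
  -- `A ⊸ (B ◁ C) ⟶ (A ◁ 1) ⊸ (B ◁ C) ⟶ (A ⊸ B) ◁ (1 ⊸ C) ⟶ (A ⊸ B) ◁ C`.
  | sqL_pos A B C =>
    exact (Deriv.limp_left (p := false) _ (IBVRule.u_down_seqR A).deriv).trans <|
      (UpRule.q_up_neg A B one C).deriv.trans <|
        Deriv.seq_right _ (UpRule.u_up_limp false C).deriv
  | sqR_pos A B C =>
    exact (Deriv.limp_left (p := false) _ (IBVRule.u_down_seqL A).deriv).trans <|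
      (UpRule.q_up_neg one B A C).deriv.trans <|
        Deriv.seq_left _ (UpRule.u_up_limp false B).deriv
  | sqL_neg A B C =>
    exact (Deriv.tens_left (p := true) _ (IBVRule.u_down_seqR A).deriv).trans <|
      (UpRule.q_up_pos A B one C).deriv.trans <|
        Deriv.seq_right _ (UpRule.u_up_tens true C).deriv
  | sqR_neg A B C =>
    exact (Deriv.tens_left (p := true) _ (IBVRule.u_down_seqL A).deriv).trans <|
      (UpRule.q_up_pos one B A C).deriv.trans <|
        Deriv.seq_left _ (UpRule.u_up_tens true B).deriv
  | q_down_pos A B C D => exact (UpRule.q_up_neg A B C D).deriv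
  | q_down_neg A B C D => exact (UpRule.q_up_pos A B C D).deriv
  | com_tens p A B => exact (IBVRule.com_tens (!p) B A).deriv
  | asso_tens p A B C => exact Deriv.tens_assoc_symm (!p) A B C
  | assoL_seq p A B C => exact (IBVRule.assoR_seq (!p) A B C).deriv
  | assoR_seq p A B C => exact (IBVRule.assoL_seq (!p) A B C).deriv
  | u_down_tens p A => exact (UpRule.u_up_tens (!p) A).deriv
  | u_down_limp p A => exact (UpRule.u_up_limp (!p) A).deriv
  | cur p A B C => exact (IBVRule.ruc (!p) A B C).deriv
  | ruc p A B C => exact (IBVRule.cur (!p) A B C).deriv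

theorem Step.deriv_reverse {p : Bool} {X Y : IBVF} (h : Step SIBVRule p X Y) :
    Deriv SIBVRule (!p) Y X := by
  induction h with
  | rule r => exact r.elim IBVRule.deriv_reverse UpRule.deriv_reverse
  | tensL _ ih => exact ih.tens_left _
  | tensR _ ih => exact ih.tens_right _
  | seqL _ ih => exact ih.seq_left _
  | seqR _ ih => exact ih.seq_right _
  | limpL _ ih => exact ih.limp_left _
  | limpR _ ih => exact ih.limp_right _

theorem Deriv.reverse {p : Bool} {X Y : IBVF} (h : Deriv SIBVRule p X Y) :
    Deriv SIBVRule (!p) Y X := by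
  induction h with
  | refl => exact ReflTransGen.refl
  | tail _ hstep ih => exact hstep.deriv_reverse.trans ih

/-- Modus ponens for SIBV: if A⊸B and A are provable in SIBV, so is B. -/
theorem SIBV.modus_ponens {A B : IBVF}
    (h₁ : SIBVProvable (limp A B)) (h₂ : SIBVProvable A) : SIBVProvable B :=
  have refute_A : Deriv SIBVRule false A one := Deriv.reverse h₂
  Deriv.trans h₁ <| (Deriv.limp_left B refute_A).trans (UpRule.u_up_limp true B).deriv
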